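/- Let p be a prime, q = p^f, and K = 𝔽_q((ϖ)) the field of formal Laurent series over the finite field 𝔽_q with q elements. Then the quotient group K/℘(K) is countably infinite. -/

import Mathlib

/-! Write `℘ y = y ^ p - y`. Since `0` is a simple root of `T ^ p - T - X g` modulo `X`
(the derivative is `-1`), Hensel's lemma in the `X`-adically complete ring `R⟦X⟧` puts every
Laurent series of positive order in `℘(K)`. Hence every class of `K/℘(K)` contains a series with
finite support, and over a countable coefficient ring there are only countably many of those.
Conversely, if `y` has negative order then `℘ y` has order `p · ord y`, and otherwise `℘ y` has
nonnegative order; so an element of `℘(K)` of negative order has order divisible by `p`, and the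
monomials `ϖ ^ (-(p k + 1))` are pairwise incongruent modulo `℘(K)`. -/

open HahnSeries

namespace PowerSeries

theorem exists_pow_sub_self_eq_X_mul {R : Type*} [CommRing R] {n : ℕ} (hn : 2 ≤ n) (g : R⟦X⟧) :
    ∃ a : R⟦X⟧, a ^ n - a = X * g := by
  set P : Polynomial R⟦X⟧ := .X ^ n - (.X + .C (X * g))
  have hmonic : P.Monic := by
    refine Polynomial.monic_X_pow_sub ((Polynomial.degree_add_le _ _).trans_lt ?_)
    exact max_lt (Polynomial.degree_X_le.trans_lt (by exact_mod_cast hn))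
      (Polynomial.degree_C_le.trans_lt (by exact_mod_cast (show 0 < n by omega)))
  have hroot : P.eval 0 ∈ Ideal.span {X} := by
    simp [P, zero_pow (show n ≠ 0 by omega), Ideal.mem_span_singleton]
  have hsimple : IsUnit ((Polynomial.derivative P).eval 0) := by
    simp [P, Polynomial.derivative_X_pow, zero_pow (show n - 1 ≠ 0 by omega)]
  obtain ⟨a, ha, -⟩ :=
    HenselianRing.is_henselian P hmonic 0 hroot (hsimple.map (Ideal.Quotient.mk _))
  exact ⟨a, by simpa [P, sub_eq_zero, sub_add_eq_sub_sub] using ha⟩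

end PowerSeries

namespace HahnSeries

theorem order_sub_of_order_lt {Γ R : Type*} [LinearOrder Γ] [Zero Γ] [AddGroup R]
    {x y : HahnSeries Γ R} (hx : x ≠ 0) (hy : y ≠ 0) (h : x.order < y.order) :
    (x - y).order = x.order := by
  have htop : x.orderTop < y.orderTop := by
    rwa [← order_eq_orderTop_of_ne_zero hx, ← order_eq_orderTop_of_ne_zero hy, WithTop.coe_lt_coe]
  have hxy : x - y ≠ 0 := by
    rw [← orderTop_ne_top, orderTop_sub htop, orderTop_ne_top]
    exact hx
  exact WithTop.coe_injective <| by
    rw [order_eq_orderTop_of_ne_zero hxy, orderTop_sub htop, order_eq_orderTop_of_ne_zero hx]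

instance instCharP {Γ R : Type*} [PartialOrder Γ] [AddCommMonoid Γ]
    [IsOrderedCancelAddMonoid Γ] [Semiring R] (p : ℕ) [CharP R p] : CharP (HahnSeries Γ R) p :=
  charP_of_injective_ringHom C_injective p

end HahnSeries

section ArtinSchreier

variable (K : Type*) [CommRing K] (p : ℕ) [ExpChar K p]

def artinSchreier : K →+ K := (frobenius K p).toAddMonoidHom - AddMonoidHom.id K

theorem artinSchreier_apply (y : K) : artinSchreier K p y = y ^ p - y := rfl

end ArtinSchreier

namespace LaurentSeries

open PowerSeries in
theorem exists_eq_ofFinsupp_add_X_mul {R : Type*} [Semiring R] (x : R⸨X⸩) :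
    ∃ (f : ℤ →₀ R) (g : R⟦X⟧), x = ofFinsupp f + ofPowerSeries ℤ R (X * g) := by
  have hfin : (Function.support fun i : ℤ => if i ≤ 0 then x.coeff i else 0).Finite := by
    refine (Set.finite_Icc x.order 0).subset fun i hi => ?_
    rw [Function.mem_support, ne_eq, ite_eq_right_iff, Classical.not_imp] at hi
    exact ⟨order_le_of_coeff_ne_zero hi.2, hi.1⟩
  refine ⟨Finsupp.ofSupportFinite _ hfin, mk fun n => x.coeff (n + 1), ?_⟩
  ext i
  rw [coeff_add, coeff_ofFinsupp, Finsupp.ofSupportFinite_coe, coeff_coe]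
  rcases lt_trichotomy i 0 with hi | rfl | hi
  · simp [hi, hi.le]
  · simp
  · obtain ⟨m, rfl⟩ : ∃ m : ℕ, i = m + 1 := ⟨i.natAbs - 1, by omega⟩
    rw [if_neg (by omega), if_neg (by omega), show ((m : ℤ) + 1).natAbs = m + 1 by omega,
      coeff_succ_X_mul, coeff_mk, zero_add]

theorem dvd_order_pow_sub_self {R : Type*} [Ring R] [NoZeroDivisors R] {n : ℕ} (hn : 2 ≤ n)
    (y : R⸨X⸩) (h : (y ^ n - y).order < 0) : (n : ℤ) ∣ (y ^ n - y).order := by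
  have hy : y ≠ 0 := by
    rintro rfl
    simp [zero_pow (show n ≠ 0 by omega)] at h
  rcases lt_or_ge y.order 0 with hneg | hnonneg
  · have hlt : (y ^ n).order < y.order := by
      rw [order_pow, nsmul_eq_mul]
      nlinarith
    rw [order_sub_of_order_lt (pow_ne_zero n hy) hy hlt, order_pow, nsmul_eq_mul]
    exact dvd_mul_right _ _
  · refine absurd h (not_lt.2 ?_)
    rw [← zero_le_orderTop_iff]
    refine le_trans (le_min ?_ ?_) min_orderTop_le_orderTop_sub <;> rw [zero_le_orderTop_iff]
    · rw [order_pow, nsmul_eq_mul]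
      positivity
    · exact hnonneg

variable {R : Type*} [CommRing R] (p : ℕ) [hp : Fact p.Prime] [CharP R p]

theorem countable_quotient_range_artinSchreier [Countable R] :
    Countable (R⸨X⸩ ⧸ (artinSchreier R⸨X⸩ p).range) := by
  have hsurj : Function.Surjective
      fun f : ℤ →₀ R => (ofFinsupp f : R⸨X⸩ ⧸ (artinSchreier R⸨X⸩ p).range) := by
    intro q
    obtain ⟨x, rfl⟩ := QuotientAddGroup.mk_surjective q
    obtain ⟨f, g, rfl⟩ := exists_eq_ofFinsupp_add_X_mul x
    obtain ⟨a, ha⟩ := PowerSeries.exists_pow_sub_self_eq_X_mul hp.out.two_le g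
    refine ⟨f, QuotientAddGroup.eq_iff_sub_mem.2 ⟨-ofPowerSeries ℤ R a, ?_⟩⟩
    rw [map_neg, artinSchreier_apply, ← map_pow, ← map_sub, ha, sub_add_cancel_left]
  exact hsurj.countable

theorem mk_single_ne_mk_single [NoZeroDivisors R] {a b : ℤ} (hab : a < b) (ha : a < 0)
    (hpa : ¬ (p : ℤ) ∣ a) {c d : R} (hc : c ≠ 0) (hd : d ≠ 0) :
    (single a c : R⸨X⸩ ⧸ (artinSchreier R⸨X⸩ p).range) ≠ single b d := by
  rw [Ne, QuotientAddGroup.eq_iff_sub_mem]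
  rintro ⟨y, hy⟩
  rw [artinSchreier_apply] at hy
  have hord : (single a c - single b d : R⸨X⸩).order = a := by
    rw [order_sub_of_order_lt (single_ne_zero hc) (single_ne_zero hd)
      (by rwa [order_single hc, order_single hd]), order_single hc]
  refine hpa (hord ▸ hy ▸ dvd_order_pow_sub_self hp.out.two_le y ?_)
  rwa [hy, hord]

theorem infinite_quotient_range_artinSchreier [IsDomain R] :
    Infinite (R⸨X⸩ ⧸ (artinSchreier R⸨X⸩ p).range) := by
  set e : ℕ → ℤ := fun k => -(p * k + 1)
  have he_neg (k : ℕ) : e k < 0 := neg_neg_of_pos (by positivity)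
  have he_anti : StrictAnti e := fun k l hkl => by
    simp only [e]; gcongr; exact_mod_cast hp.out.pos
  have he_ndvd (k : ℕ) : ¬ (p : ℤ) ∣ e k := fun hdvd => by
    have h1 : (p : ℤ) ∣ 1 :=
      (Int.dvd_add_right (dvd_mul_right _ _)).1 (Int.dvd_neg.1 hdvd)
    exact hp.out.one_lt.ne' (by exact_mod_cast Int.eq_one_of_dvd_one (by positivity) h1)
  refine Infinite.of_injective
    (fun k => (single (e k) (1 : R) : R⸨X⸩ ⧸ (artinSchreier R⸨X⸩ p).range)) fun k l h => ?_
  by_contra hne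
  rcases lt_or_gt_of_ne hne with hlt | hlt
  · exact mk_single_ne_mk_single p (he_anti hlt) (he_neg l) (he_ndvd l) one_ne_zero one_ne_zero
      h.symm
  · exact mk_single_ne_mk_single p (he_anti hlt) (he_neg k) (he_ndvd k) one_ne_zero one_ne_zero h

end LaurentSeries

theorem artin_schreier_quotient_countably_infinite_general
    (p f : ℕ) [hp : Fact p.Prime]
    (F : Type*) [Field F] [Fintype F] (hcard : Fintype.card F = p ^ f) :
    ∃ W : AddSubgroup (LaurentSeries F),
      (W : Set (LaurentSeries F)) = Set.range (fun y : LaurentSeries F => y ^ p - y) ∧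
      Countable (LaurentSeries F ⧸ W) ∧ Infinite (LaurentSeries F ⧸ W) := by
  have : CharP F p := charP_of_card_eq_prime_pow hcard
  exact ⟨(artinSchreier (LaurentSeries F) p).range, AddMonoidHom.coe_range _,
    LaurentSeries.countable_quotient_range_artinSchreier p,
    LaurentSeries.infinite_quotient_range_artinSchreier p⟩

/-- **`K/℘(K)` is countably infinite for `K = 𝔽_q((ϖ))`.**
Let `p` be a prime, `q = p^f`, and `K = 𝔽_q((ϖ))` the field of formal Laurent series over
the finite field with `q` elements.  The image `℘(K) = {y^p - y : y ∈ K}` of the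
Artin–Schreier map is an additive subgroup of `K`, and the quotient group `K/℘(K)` is
countably infinite. -/
theorem artin_schreier_quotient_countably_infinite
    (p f : ℕ) [hp : Fact p.Prime] (hf : f ≠ 0)
    (F : Type*) [Field F] [Fintype F] (hcard : Fintype.card F = p ^ f) :
    ∃ W : AddSubgroup (LaurentSeries F),
      (W : Set (LaurentSeries F)) = Set.range (fun y : LaurentSeries F => y ^ p - y) ∧
      Countable (LaurentSeries F ⧸ W) ∧ Infinite (LaurentSeries F ⧸ W) :=
  artin_schreier_quotient_countably_infinite_general p f (hp := hp) F hcard
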